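/- Let 0 < α < 1, 1 < β ≤ 2, μ_α ≥ 0 and μ_β < 0, and let m ≥ 2. Then the matrix I + D is strictly diagonally dominant and invertible. -/

import Mathlib

/-- Grünwald–Letnikov coefficients: `g γ 0 = 1`, `g γ k = (1 - (γ+1)/k) * g γ (k-1)`. -/
noncomputable def g (γ : ℝ) : ℕ → ℝ
  | 0 => 1
  | k + 1 => (1 - (γ + 1) / ((k : ℝ) + 1)) * g γ k

/-- WSGD coefficients: `w γ 0 = (γ/2) g γ 0`, `w γ k = (γ/2) g γ k + ((2-γ)/2) g γ (k-1)`. -/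
noncomputable def w (γ : ℝ) : ℕ → ℝ
  | 0 => γ / 2 * g γ 0
  | k + 1 => γ / 2 * g γ (k + 1) + (2 - γ) / 2 * g γ k

/-- The `(m-1) × (m-1)` lower-Hessenberg Toeplitz matrix with entries
`w_{i-j+1}^{(γ)}` for `j ≤ i+1` (1-based indices) and `0` otherwise. -/
noncomputable def wsgdMatrix (γ : ℝ) (m : ℕ) : Matrix (Fin (m - 1)) (Fin (m - 1)) ℝ :=
  fun i j => if (j : ℕ) ≤ (i : ℕ) + 1 then w γ ((i : ℕ) + 1 - (j : ℕ)) else 0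

/-- The Crank–Nicolson matrix `D = μ_α (A + Aᵀ) + μ_β (B + Bᵀ)`. -/
noncomputable def matD (α β μα μβ : ℝ) (m : ℕ) : Matrix (Fin (m - 1)) (Fin (m - 1)) ℝ :=
  μα • (wsgdMatrix α m + Matrix.transpose (wsgdMatrix α m)) + μβ • (wsgdMatrix β m + Matrix.transpose (wsgdMatrix β m))


/-!
`A + Aᵀ` is the symmetric Toeplitz matrix with symbol
`c = (2 w₁, w₀ + w₂, w₃, w₄, …)`, so each row has off-diagonal absolute sum at most
`2 ∑_{d ≥ 1} |c_d|`. For `0 ≤ γ ≤ 1` the coefficients `c_d`, `d ≥ 1`, are all `≤ 0`, and the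
absorption identity `g^{(γ)}_{k+1} = -γ/(k+1) · g^{(γ-1)}_k` turns the partial sums of `w` into
`γ/2 · g^{(γ-1)}_{n+1} + (2-γ)/2 · g^{(γ-1)}_n ≥ 0`; hence `2 ∑_{d ≥ 1} |c_d| ≤ c_0`.
For `1 ≤ γ ≤ 2` every sign flips. With `μ_α ≥ 0 > μ_β` both parts of `D` are then weakly
diagonally dominant with nonnegative diagonal, the identity makes `I + D` strictly so, and
Levy–Desplanques gives invertibility.
-/

open Finset
open scoped Matrix

/-- Each distance `d ≥ 1` from `i` is attained by at most two indices, one on each side. -/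
theorem sum_erase_comp_dist_le {R : Type*} [AddCommMonoid R] [PartialOrder R]
    [IsOrderedAddMonoid R] {n : ℕ} (f : ℕ → R) (hf : ∀ d, 0 ≤ f d) (i : Fin n) :
    ∑ j ∈ univ.erase i, f (Nat.dist i j) ≤ 2 • ∑ d ∈ Ico 1 n, f d := by
  set φ : Fin n → ℕ × Bool := fun j => (Nat.dist i j, decide (j < i))
  have hφ : Set.InjOn φ (univ.erase i) := by
    intro a ha b hb hab
    simp only [φ, Prod.mk.injEq, decide_eq_decide, Fin.lt_def] at hab
    have := ne_of_mem_erase ha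
    have := ne_of_mem_erase hb
    simp only [Nat.dist] at hab
    omega
  calc ∑ j ∈ univ.erase i, f (Nat.dist i j) = ∑ p ∈ (univ.erase i).image φ, f p.1 :=
        (sum_image (f := fun p => f p.1) hφ).symm
    _ ≤ ∑ p ∈ Ico 1 n ×ˢ (univ : Finset Bool), f p.1 := by
        refine sum_le_sum_of_subset_of_nonneg ?_ fun p _ _ => hf p.1
        intro p hp
        obtain ⟨j, hj, rfl⟩ := mem_image.mp hp
        have := ne_of_mem_erase hj
        simp only [φ, mem_product, mem_Ico, mem_univ, and_true, Nat.dist]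
        omega
    _ = 2 • ∑ d ∈ Ico 1 n, f d := by simp [sum_product, ← smul_sum]

theorem sum_abs_erase_lt_of_apply_eq_dist {R : Type*} [AddCommGroup R] [LinearOrder R]
    [IsOrderedAddMonoid R] {n : ℕ} {M : Matrix (Fin n) (Fin n) R} {c : ℕ → R}
    (hM : ∀ i j, M i j = c (Nat.dist i j)) (hc : 2 • ∑ d ∈ Ico 1 n, |c d| < |c 0|) (i : Fin n) :
    ∑ j ∈ univ.erase i, |M i j| < |M i i| := by
  simp only [hM, Nat.dist_self]
  exact (sum_erase_comp_dist_le (fun d => |c d|) (fun _ => abs_nonneg _) i).trans_lt hc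

theorem g_succ (γ : ℝ) (k : ℕ) : g γ (k + 1) = (1 - (γ + 1) / (k + 1)) * g γ k := rfl

theorem g_succ_eq_neg_mul_g_sub_one (γ : ℝ) (k : ℕ) :
    g γ (k + 1) = -(γ / (k + 1)) * g (γ - 1) k := by
  induction k with
  | zero => simp [g]
  | succ k ih =>
    rw [g_succ, ih, g_succ (γ - 1)]
    push_cast
    field_simp
    ring

theorem sum_range_g (γ : ℝ) (n : ℕ) : ∑ k ∈ range (n + 1), g γ k = g (γ - 1) n := by
  induction n with
  | zero => simp [g]
  | succ n ih =>
    rw [sum_range_succ, ih, g_succ_eq_neg_mul_g_sub_one, g_succ (γ - 1)]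
    ring

theorem sum_range_w (γ : ℝ) (n : ℕ) :
    ∑ k ∈ range (n + 2), w γ k = γ / 2 * g (γ - 1) (n + 1) + (2 - γ) / 2 * g (γ - 1) n := by
  rw [← sum_range_g, ← sum_range_g, sum_range_succ' _ (n + 1), sum_range_succ' (g γ) (n + 1),
    mul_add, mul_sum, mul_sum, add_right_comm, ← sum_add_distrib]
  rfl

theorem w_one (γ : ℝ) : w γ 1 = (1 - γ) * (2 + γ) / 2 := by
  simp [w, g]; ring

theorem w_zero_add_w_two (γ : ℝ) : w γ 0 + w γ 2 = γ * (γ - 1) * (γ + 2) / 4 := by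
  simp [w, g]; ring

theorem g_nonneg {γ : ℝ} (hγ : γ ≤ 0) (k : ℕ) : 0 ≤ g γ k := by
  induction k with
  | zero => simp [g]
  | succ k ih =>
    rw [g_succ]
    refine mul_nonneg ?_ ih
    rw [sub_nonneg, div_le_one (by positivity)]
    linarith [k.cast_nonneg (α := ℝ)]

theorem g_succ_nonpos {γ : ℝ} (h0 : 0 ≤ γ) (h1 : γ ≤ 1) (k : ℕ) : g γ (k + 1) ≤ 0 := by
  rw [g_succ_eq_neg_mul_g_sub_one]
  exact mul_nonpos_of_nonpos_of_nonneg (by simp; positivity) (g_nonneg (by linarith) k)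

theorem g_add_two_nonneg {γ : ℝ} (h1 : 1 ≤ γ) (h2 : γ ≤ 2) (k : ℕ) : 0 ≤ g γ (k + 2) := by
  rw [g_succ_eq_neg_mul_g_sub_one]
  exact mul_nonneg_of_nonpos_of_nonpos (by simp; positivity)
    (g_succ_nonpos (by linarith) (by linarith) k)

theorem w_add_two_nonpos {γ : ℝ} (h0 : 0 ≤ γ) (h1 : γ ≤ 1) (k : ℕ) : w γ (k + 2) ≤ 0 := by
  have := g_succ_nonpos h0 h1 (k + 1)
  have := g_succ_nonpos h0 h1 k
  simp only [w]
  nlinarith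

theorem w_add_three_nonneg {γ : ℝ} (h1 : 1 ≤ γ) (h2 : γ ≤ 2) (k : ℕ) : 0 ≤ w γ (k + 3) := by
  have := g_add_two_nonneg h1 h2 (k + 1)
  have := g_add_two_nonneg h1 h2 k
  simp only [w]
  nlinarith

noncomputable def wsgdSymbol (γ : ℝ) : ℕ → ℝ
  | 0 => 2 * w γ 1
  | 1 => w γ 0 + w γ 2
  | d + 2 => w γ (d + 3)

theorem wsgdMatrix_add_transpose_apply (γ : ℝ) (m : ℕ) (i j : Fin (m - 1)) :
    (wsgdMatrix γ m + (wsgdMatrix γ m)ᵀ) i j = wsgdSymbol γ (Nat.dist i j) := by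
  simp only [Matrix.add_apply, Matrix.transpose_apply, wsgdMatrix]
  generalize (i : ℕ) = a, (j : ℕ) = b
  rcases le_total a b with h | h <;> obtain ⟨d, rfl⟩ := Nat.exists_eq_add_of_le h <;>
    rcases d with _ | _ | d <;> simp [Nat.dist, wsgdSymbol, add_assoc, two_mul, add_comm (w γ 2)]

theorem sum_Ico_wsgdSymbol (γ : ℝ) (n : ℕ) :
    ∑ d ∈ Ico 1 (n + 2), wsgdSymbol γ d = ∑ k ∈ range (n + 3), w γ k - w γ 1 := by
  induction n with
  | zero => simp [sum_range_succ, wsgdSymbol]; ring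
  | succ n ih =>
    rw [sum_Ico_succ_top (by omega), ih, sum_range_succ _ (n + 3), wsgdSymbol]
    ring

theorem wsgdSymbol_nonpos {γ : ℝ} (h0 : 0 ≤ γ) (h1 : γ ≤ 1) : ∀ {d}, d ≠ 0 → wsgdSymbol γ d ≤ 0
  | 0, h => absurd rfl h
  | 1, _ => by
    rw [wsgdSymbol, w_zero_add_w_two]
    have := mul_nonpos_of_nonneg_of_nonpos h0 (sub_nonpos.2 h1)
    nlinarith
  | d + 2, _ => w_add_two_nonpos h0 h1 (d + 1)

theorem wsgdSymbol_nonneg {γ : ℝ} (h1 : 1 ≤ γ) (h2 : γ ≤ 2) : ∀ {d}, d ≠ 0 → 0 ≤ wsgdSymbol γ d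
  | 0, h => absurd rfl h
  | 1, _ => by
    rw [wsgdSymbol, w_zero_add_w_two]
    have := mul_nonneg (by linarith : 0 ≤ γ) (sub_nonneg.2 h1)
    nlinarith
  | d + 2, _ => w_add_three_nonneg h1 h2 d

theorem two_mul_sum_abs_wsgdSymbol_le {γ : ℝ} (h0 : 0 ≤ γ) (h1 : γ ≤ 1) (n : ℕ) :
    2 * ∑ d ∈ Ico 1 n, |wsgdSymbol γ d| ≤ wsgdSymbol γ 0 := by
  obtain hn | ⟨n, rfl⟩ : n ≤ 1 ∨ ∃ k, n = k + 2 := by rcases n with _ | _ | n <;> simp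
  · rw [Ico_eq_empty_of_le hn, sum_empty, mul_zero, wsgdSymbol, w_one]
    nlinarith
  have hw : 0 ≤ ∑ k ∈ range (n + 3), w γ k := by
    rw [sum_range_w]
    have := g_nonneg (γ := γ - 1) (by linarith)
    exact add_nonneg (mul_nonneg (by linarith) (this _)) (mul_nonneg (by linarith) (this _))
  rw [sum_congr rfl fun d hd =>
      abs_of_nonpos (wsgdSymbol_nonpos h0 h1 (Nat.pos_iff_ne_zero.mp (mem_Ico.1 hd).1)),
    sum_neg_distrib, sum_Ico_wsgdSymbol, wsgdSymbol]
  linarith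

theorem two_mul_sum_abs_wsgdSymbol_le_neg {γ : ℝ} (h1 : 1 ≤ γ) (h2 : γ ≤ 2) (n : ℕ) :
    2 * ∑ d ∈ Ico 1 n, |wsgdSymbol γ d| ≤ -wsgdSymbol γ 0 := by
  obtain hn | ⟨n, rfl⟩ : n ≤ 1 ∨ ∃ k, n = k + 2 := by rcases n with _ | _ | n <;> simp
  · rw [Ico_eq_empty_of_le hn, sum_empty, mul_zero, wsgdSymbol, w_one]
    nlinarith
  have hw : ∑ k ∈ range (n + 3), w γ k ≤ 0 := by
    rw [sum_range_w]
    have := g_succ_nonpos (γ := γ - 1) (by linarith) (by linarith)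
    exact add_nonpos (mul_nonpos_of_nonneg_of_nonpos (by linarith) (this _))
      (mul_nonpos_of_nonneg_of_nonpos (by linarith) (this _))
  rw [sum_congr rfl fun d hd =>
      abs_of_nonneg (wsgdSymbol_nonneg h1 h2 (Nat.pos_iff_ne_zero.mp (mem_Ico.1 hd).1)),
    sum_Ico_wsgdSymbol, wsgdSymbol]
  linarith

theorem stmt_16_general (α β μα μβ : ℝ) (hα0 : 0 < α) (hα1 : α < 1) (hβ1 : 1 < β) (hβ2 : β ≤ 2)
    (hμα : 0 ≤ μα) (hμβ : μβ < 0) (m : ℕ) :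
    (∀ i : Fin (m - 1),
      ∑ j ∈ Finset.univ.erase i, |(1 + matD α β μα μβ m) i j| < |(1 + matD α β μα μβ m) i i|) ∧
    IsUnit (1 + matD α β μα μβ m) := by
  set e : ℕ → ℝ := fun d =>
    (if d = 0 then 1 else 0) + μα * wsgdSymbol α d + μβ * wsgdSymbol β d
  have hM : ∀ i j, (1 + matD α β μα μβ m) i j = e (Nat.dist i j) := by
    intro i j
    have hij : i = j ↔ Nat.dist i j = 0 := by simp only [Fin.ext_iff, Nat.dist]; omega
    rw [matD, Matrix.add_apply, Matrix.add_apply, Matrix.smul_apply, Matrix.smul_apply,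
      wsgdMatrix_add_transpose_apply, wsgdMatrix_add_transpose_apply, Matrix.one_apply]
    simp only [e, hij, smul_eq_mul, add_assoc]
  have he : 2 • ∑ d ∈ Ico 1 (m - 1), |e d| < |e 0| := by
    have hoff : ∀ d ∈ Ico 1 (m - 1),
        |e d| ≤ μα * |wsgdSymbol α d| + -μβ * |wsgdSymbol β d| := fun d hd => by
      simp only [e, if_neg (Nat.pos_iff_ne_zero.mp (mem_Ico.1 hd).1), zero_add]
      refine (abs_add_le _ _).trans_eq ?_
      rw [abs_mul, abs_mul, abs_of_nonneg hμα, abs_of_neg hμβ]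
    calc 2 • ∑ d ∈ Ico 1 (m - 1), |e d|
        ≤ μα * (2 * ∑ d ∈ Ico 1 (m - 1), |wsgdSymbol α d|)
          + -μβ * (2 * ∑ d ∈ Ico 1 (m - 1), |wsgdSymbol β d|) := by
          rw [two_nsmul, ← two_mul]
          have := sum_le_sum hoff
          rw [sum_add_distrib, ← mul_sum, ← mul_sum] at this
          linarith
      _ ≤ μα * wsgdSymbol α 0 + -μβ * -wsgdSymbol β 0 := by
          gcongr
          · exact two_mul_sum_abs_wsgdSymbol_le hα0.le hα1.le _
          · linarith
          · exact two_mul_sum_abs_wsgdSymbol_le_neg hβ1.le hβ2 _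
      _ < e 0 := by simp only [e, ↓reduceIte]; linarith
      _ ≤ |e 0| := le_abs_self _
  have hdom := sum_abs_erase_lt_of_apply_eq_dist hM he
  refine ⟨hdom, (Matrix.isUnit_iff_isUnit_det _).mpr (isUnit_iff_ne_zero.mpr ?_)⟩
  exact det_ne_zero_of_sum_row_lt_diag fun i => by simpa only [Real.norm_eq_abs] using hdom i

theorem stmt_16 (α β μα μβ : ℝ) (hα0 : 0 < α) (hα1 : α < 1) (hβ1 : 1 < β) (hβ2 : β ≤ 2)
    (hμα : 0 ≤ μα) (hμβ : μβ < 0) (m : ℕ) (hm : 2 ≤ m) :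
    (∀ i : Fin (m - 1),
      ∑ j ∈ Finset.univ.erase i, |(1 + matD α β μα μβ m) i j| < |(1 + matD α β μα μβ m) i i|) ∧
    IsUnit (1 + matD α β μα μβ m) :=
  stmt_16_general α β μα μβ hα0 hα1 hβ1 hβ2 hμα hμβ m
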